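/- Let q be an odd prime power, F = GF(q), and let δ ∈ F be a non-square. Let W be the 4-dimensional subspace of quadratic forms over F spanned by X0X1, X0X2, X1X2 and δ·X1^2+X2^2 (the web of conics associated with the line-orbit o_{8,2}). Then among the conics of W there are no double lines, exactly q^2+(3q+1)/2 pairs of real lines, exactly (q+1)/2 pairs of imaginary lines, and exactly q^3−q nonsingular conics. -/

import Mathlib

/-!
A form of the web is `b X0X1 + c X0X2 + d X1X2 + s (δX1^2 + X2^2)`, with discriminant
`bcd - s (b^2 + δc^2)`. For `(b, c) ≠ 0` this is a nonzero linear form in `(d, s)`, so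
counting the zero vector there are `q^2 + (q^2 - 1) q` singular vectors. A double line `c l^2`
of the web would have `l = l1 X1 + l2 X2` with `l1^2 = δ l2^2`, impossible for a non-square `δ`.
Every form vanishes at `(1:0:0)`; a singular such form splits over `F` unless `b = c = 0`, and
then it is the binary form `sδ X1^2 + d X1X2 + s X2^2`, which splits iff `d^2 - 4δs^2` is a
square. Rescaling by `s` reduces this to the values of `d^2 - 4δ`; each square value is hit by
two points of the hyperbola `e^2 = d^2 - 4δ`, which has `q - 1` points, so `(q^2 - 1)/2`
vectors give imaginary pairs. Each conic accounts for `q - 1` nonzero vectors.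
-/

open Matrix

namespace Conics

/-- Coefficient vector (a0,...,a5) of the product of two linear forms
`(b0*X0+b1*X1+b2*X2)*(c0*X0+c1*X1+c2*X2)`, where the quadratic form with
coefficient vector `a` is `a0*X0^2 + a1*X0*X1 + a2*X0*X2 + a3*X1^2 + a4*X1*X2 + a5*X2^2`. -/
def mulLin {F : Type} [Field F] (b c : Fin 3 → F) : Fin 6 → F :=
  ![b 0 * c 0, b 0 * c 1 + b 1 * c 0, b 0 * c 2 + b 2 * c 0,
    b 1 * c 1, b 1 * c 2 + b 2 * c 1, b 2 * c 2]

/-- The discriminant of the quadratic form with coefficient vector `a`. -/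
def disc {F : Type} [Field F] (a : Fin 6 → F) : F :=
  4 * a 0 * a 3 * a 5 + a 1 * a 2 * a 4 - a 0 * a 4 ^ 2 - a 3 * a 2 ^ 2 - a 5 * a 1 ^ 2

/-- `f_a` is a double line: `f_a = c * l^2` for a nonzero scalar `c` and nonzero linear form `l`. -/
def IsDoubleLine {F : Type} [Field F] (a : Fin 6 → F) : Prop :=
  ∃ (c : F) (l : Fin 3 → F), c ≠ 0 ∧ l ≠ 0 ∧ a = c • mulLin l l

/-- `f_a` is a pair of (distinct) real lines: `f_a = l1 * l2` with neither linear form a scalar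
multiple of the other. -/
def IsRealPair {F : Type} [Field F] (a : Fin 6 → F) : Prop :=
  ∃ l1 l2 : Fin 3 → F, (¬ ∃ t : F, l2 = t • l1) ∧ (¬ ∃ t : F, l1 = t • l2) ∧ a = mulLin l1 l2

/-- `f_a` is a pair of conjugate imaginary lines: singular, but not a product of two linear
forms over `F`. -/
def IsImagPair {F : Type} [Field F] (a : Fin 6 → F) : Prop :=
  disc a = 0 ∧ ¬ ∃ l1 l2 : Fin 3 → F, a = mulLin l1 l2

/-- `f_a` is a nonsingular conic. -/
def IsNonsingular {F : Type} [Field F] (a : Fin 6 → F) : Prop :=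
  disc a ≠ 0

/-- The number of conics of a given type `T` in a linear system `W` (a subspace of the space of
quadratic forms, identified with `F^6`): the number of 1-dimensional subspaces `⟨a⟩` of `W`,
`a ≠ 0`, such that `f_a` has type `T`. -/
noncomputable def numConics {F : Type} [Field F] (W : Submodule F (Fin 6 → F))
    (T : (Fin 6 → F) → Prop) : ℕ :=
  Set.ncard {P : Submodule F (Fin 6 → F) |
    ∃ a : Fin 6 → F, a ≠ 0 ∧ a ∈ W ∧ T a ∧ P = Submodule.span F {a}}

/-- The symmetric 3×3 matrix associated with a point `y` of `PG(5,q)`. -/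
def M {F : Type} [Field F] (y : Fin 6 → F) : Matrix (Fin 3) (Fin 3) F :=
  !![y 0, y 1, y 2; y 1, y 3, y 4; y 2, y 4, y 5]

/-- The pairing `B(a,y) = a0*y0 + ... + a5*y5`. -/
def Bform {F : Type} [Field F] (a y : Fin 6 → F) : F :=
  a 0 * y 0 + a 1 * y 1 + a 2 * y 2 + a 3 * y 3 + a 4 * y 4 + a 5 * y 5

/-- The squab of conics associated with a (nonzero) point `y`: the hyperplane
`{a : B(a,y) = 0}` of the space of quadratic forms. -/
def squab {F : Type} [Field F] (y : Fin 6 → F) : Submodule F (Fin 6 → F) where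
  carrier := {a | Bform a y = 0}
  add_mem' := by
    intro a b ha hb
    simp only [Set.mem_setOf_eq, Bform, Pi.add_apply] at *
    linear_combination ha + hb
  zero_mem' := by simp [Bform]
  smul_mem' := by
    intro c a ha
    simp only [Set.mem_setOf_eq, Bform, Pi.smul_apply, smul_eq_mul] at *
    linear_combination c * ha

section Forms

variable {F : Type} [Field F]

lemma mulLin_comm (l₁ l₂ : Fin 3 → F) : mulLin l₁ l₂ = mulLin l₂ l₁ := by
  ext i; fin_cases i <;> simp [mulLin] <;> ring

lemma mulLin_smul_left (t : F) (l₁ l₂ : Fin 3 → F) :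
    mulLin (t • l₁) l₂ = t • mulLin l₁ l₂ := by
  ext i; fin_cases i <;> simp [mulLin] <;> ring

lemma mulLin_zero_right (l : Fin 3 → F) : mulLin l 0 = 0 := by
  ext i; fin_cases i <;> simp [mulLin]

lemma disc_mulLin (l₁ l₂ : Fin 3 → F) : disc (mulLin l₁ l₂) = 0 := by
  simp [disc, mulLin]
  ring

lemma disc_smul (c : F) (a : Fin 6 → F) : disc (c • a) = c ^ 3 * disc a := by
  simp only [disc, Pi.smul_apply, smul_eq_mul]; ring

/-- The discriminant of the binary form `f_a(0, X1, X2) = a3 X1^2 + a4 X1X2 + a5 X2^2`. -/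
def binaryDisc (a : Fin 6 → F) : F := a 4 ^ 2 - 4 * a 3 * a 5

lemma isSquare_binaryDisc_mulLin (l₁ l₂ : Fin 3 → F) :
    IsSquare (binaryDisc (mulLin l₁ l₂)) :=
  ⟨l₁ 1 * l₂ 2 - l₁ 2 * l₂ 1, by simp [binaryDisc, mulLin]; ring⟩

lemma exists_mulLin_of_disc_eq_zero {a : Fin 6 → F} (h0 : a 0 = 0) (h12 : a 1 ≠ 0 ∨ a 2 ≠ 0)
    (hd : disc a = 0) : ∃ l₁ l₂, a = mulLin l₁ l₂ := by
  simp only [disc, h0, zero_mul, mul_zero, sub_zero, zero_add] at hd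
  -- factor off `a1 X1 + a2 X2`; the remaining coefficient matches exactly because `disc a = 0`
  rcases h12 with h1 | h2
  · refine ⟨![1, a 3 / a 1, (a 4 * a 1 - a 3 * a 2) / a 1 ^ 2], ![0, a 1, a 2], ?_⟩
    ext i; fin_cases i <;> simp [mulLin, h0]
    · field_simp
    · field_simp; ring
    · field_simp; linear_combination -hd
  · refine ⟨![1, (a 4 * a 2 - a 5 * a 1) / a 2 ^ 2, a 5 / a 2], ![0, a 1, a 2], ?_⟩
    ext i; fin_cases i <;> simp [mulLin, h0]
    · field_simp; linear_combination -hd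
    · field_simp; ring
    · field_simp

lemma exists_mulLin_of_isSquare_binaryDisc (htwo : (2 : F) ≠ 0) {a : Fin 6 → F} (h0 : a 0 = 0)
    (h1 : a 1 = 0) (h2 : a 2 = 0) (hsq : IsSquare (binaryDisc a)) :
    ∃ l₁ l₂, a = mulLin l₁ l₂ := by
  obtain ⟨r, hr⟩ := hsq
  by_cases h5 : a 5 = 0
  · refine ⟨![0, 1, 0], ![0, a 3, a 4], ?_⟩
    ext i; fin_cases i <;> simp [mulLin, h0, h1, h2, h5]
  · refine ⟨![0, (a 4 + r) / (2 * a 5), 1], ![0, (a 4 - r) / 2, a 5], ?_⟩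
    ext i; fin_cases i <;> simp [mulLin, h0, h1, h2]
    · rw [binaryDisc] at hr; field_simp; linear_combination -hr
    · field_simp; ring

end Forms

section Types

variable {F : Type} [Field F] {a : Fin 6 → F}

lemma isImagPair_iff_of_coeff_zero (htwo : (2 : F) ≠ 0) (h0 : a 0 = 0) :
    IsImagPair a ↔ a 1 = 0 ∧ a 2 = 0 ∧ ¬ IsSquare (binaryDisc a) := by
  constructor
  · rintro ⟨hd, hnf⟩
    have h12 : a 1 = 0 ∧ a 2 = 0 := by
      by_contra h
      exact hnf (exists_mulLin_of_disc_eq_zero h0 (not_and_or.1 h) hd)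
    exact ⟨h12.1, h12.2,
      fun hsq => hnf (exists_mulLin_of_isSquare_binaryDisc htwo h0 h12.1 h12.2 hsq)⟩
  · rintro ⟨h1, h2, hsq⟩
    refine ⟨by simp [disc, h0, h1, h2], ?_⟩
    rintro ⟨l₁, l₂, rfl⟩
    exact hsq (isSquare_binaryDisc_mulLin l₁ l₂)

lemma isRealPair_iff_exists_mulLin (ha : a ≠ 0) (hd : ¬ IsDoubleLine a) :
    IsRealPair a ↔ ∃ l₁ l₂, a = mulLin l₁ l₂ := by
  refine ⟨fun ⟨l₁, l₂, _, _, h⟩ => ⟨l₁, l₂, h⟩, fun ⟨l₁, l₂, h⟩ => ?_⟩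
  have not_proportional (m₁ m₂ : Fin 3 → F) (hm : a = mulLin m₁ m₂) :
      ¬ ∃ t : F, m₂ = t • m₁ := by
    rintro ⟨t, rfl⟩
    refine hd ⟨t, m₁, ?_, ?_, by rw [hm, mulLin_comm, mulLin_smul_left]⟩ <;>
      · rintro rfl
        simp only [zero_smul, smul_zero, mulLin_zero_right] at hm
        exact ha hm
  exact ⟨l₁, l₂, not_proportional l₁ l₂ h,
    not_proportional l₂ l₁ (h.trans (mulLin_comm _ _)), h⟩

lemma IsRealPair.not_isImagPair (h : IsRealPair a) : ¬ IsImagPair a := by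
  obtain ⟨l₁, l₂, -, -, rfl⟩ := h
  exact fun hi => hi.2 ⟨l₁, l₂, rfl⟩

lemma disc_eq_zero_iff_isRealPair_or_isImagPair (ha : a ≠ 0) (hd : ¬ IsDoubleLine a) :
    disc a = 0 ↔ IsRealPair a ∨ IsImagPair a := by
  rw [isRealPair_iff_exists_mulLin ha hd]
  constructor
  · intro h
    by_cases hf : ∃ l₁ l₂, a = mulLin l₁ l₂
    · exact Or.inl hf
    · exact Or.inr ⟨h, hf⟩
  · rintro (⟨l₁, l₂, rfl⟩ | h)
    · exact disc_mulLin l₁ l₂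
    · exact h.1

variable {c : F}

lemma IsDoubleLine.smul (hc : c ≠ 0) (h : IsDoubleLine a) : IsDoubleLine (c • a) := by
  obtain ⟨c', l, hc', hl, rfl⟩ := h
  exact ⟨c * c', l, mul_ne_zero hc hc', hl, smul_smul c c' _⟩

lemma IsRealPair.smul (hc : c ≠ 0) (h : IsRealPair a) : IsRealPair (c • a) := by
  obtain ⟨l₁, l₂, h₁, h₂, rfl⟩ := h
  refine ⟨c • l₁, l₂, ?_, ?_, (mulLin_smul_left c l₁ l₂).symm⟩
  · rintro ⟨t, ht⟩
    exact h₁ ⟨t * c, by rw [ht, smul_smul]⟩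
  · rintro ⟨t, ht⟩
    exact h₂ ⟨c⁻¹ * t, by rw [← smul_smul, ← ht, inv_smul_smul₀ hc]⟩

lemma IsImagPair.smul (hc : c ≠ 0) (h : IsImagPair a) : IsImagPair (c • a) := by
  refine ⟨by rw [disc_smul, h.1, mul_zero], ?_⟩
  rintro ⟨l₁, l₂, hl⟩
  exact h.2 ⟨c⁻¹ • l₁, l₂, by rw [mulLin_smul_left, ← hl, inv_smul_smul₀ hc]⟩

lemma IsNonsingular.smul (hc : c ≠ 0) (h : IsNonsingular a) : IsNonsingular (c • a) := by
  rw [IsNonsingular, disc_smul]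
  exact mul_ne_zero (pow_ne_zero 3 hc) h

end Types

section Projective

open Finset Submodule

variable {F V : Type*} [Field F] [Fintype F] [AddCommGroup V] [Module F V]

lemma card_filter_span_singleton_eq [DecidableEq V] {s : Finset V} {a₀ : V} (ha₀ : a₀ ≠ 0)
    (hs : ∀ u : Fˣ, u • a₀ ∈ s) :
    #{a ∈ s | span F {a} = span F {a₀}} = Fintype.card F - 1 := by
  classical
  have hfiber : {a ∈ s | span F {a} = span F {a₀}} = univ.image fun u : Fˣ => u • a₀ := by
    ext a
    simp only [mem_filter, mem_image, mem_univ, true_and]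
    constructor
    · rintro ⟨-, h⟩
      exact span_singleton_eq_span_singleton.1 h.symm
    · rintro ⟨u, rfl⟩
      exact ⟨hs u, (span_singleton_eq_span_singleton.2 ⟨u, rfl⟩).symm⟩
  have hinj : Function.Injective fun u : Fˣ => u • a₀ := fun u v huv =>
    Units.ext (smul_left_injective F ha₀ huv)
  rw [hfiber, card_image_of_injective _ hinj, card_univ, Fintype.card_units]

variable [Finite V]

lemma ncard_lines_mul_card_sub_one {S : Set V} (h0 : (0 : V) ∉ S)
    (hS : ∀ a ∈ S, ∀ c : F, c ≠ 0 → c • a ∈ S) :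
    {P : Submodule F V | ∃ a ∈ S, P = span F {a}}.ncard * (Fintype.card F - 1) = S.ncard := by
  classical
  set s := (Set.toFinite S).toFinset
  have hlines :
      {P : Submodule F V | ∃ a ∈ S, P = span F {a}} = ↑(s.image fun a => span F {a}) := by
    ext P
    simp [s, eq_comm]
  have hfiber : ∀ P ∈ s.image (fun a => span F {a}),
      #{a ∈ s | span F {a} = P} = Fintype.card F - 1 := by
    simp only [mem_image]
    rintro _ ⟨a₀, ha₀, rfl⟩
    rw [Set.Finite.mem_toFinset] at ha₀
    exact card_filter_span_singleton_eq (fun h => h0 (h ▸ ha₀))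
      fun u => (Set.Finite.mem_toFinset _).2 (hS a₀ ha₀ u u.ne_zero)
  rw [hlines, Set.ncard_coe_finset, Set.ncard_eq_toFinset_card S,
    card_eq_sum_card_image (fun a => span F {a}) s, sum_congr rfl hfiber, sum_const, smul_eq_mul]

end Projective

lemma numConics_mul_card_sub_one {F : Type} [Field F] [Fintype F] (W : Submodule F (Fin 6 → F))
    {T : (Fin 6 → F) → Prop} (hT : ∀ {a} {c : F}, c ≠ 0 → T a → T (c • a)) :
    numConics W T * (Fintype.card F - 1) = {a | a ≠ 0 ∧ a ∈ W ∧ T a}.ncard := by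
  rw [numConics, ← ncard_lines_mul_card_sub_one (S := {a | a ≠ 0 ∧ a ∈ W ∧ T a})
    (fun h => h.1 rfl)
    fun a ha c hc => ⟨smul_ne_zero hc ha.1, W.smul_mem c ha.2.1, hT hc ha.2.2⟩]
  simp only [Set.mem_ofPred_eq, and_assoc]

section Web

open Finset

variable {F : Type} [Field F] (δ : F)

def web : Submodule F (Fin 6 → F) :=
  Submodule.span F
    {![0, 1, 0, 0, 0, 0], ![0, 0, 1, 0, 0, 0], ![0, 0, 0, 0, 1, 0], ![0, 0, 0, δ, 0, 1]}

/-- The form `b X0X1 + c X0X2 + d X1X2 + s (δX1^2 + X2^2)` of the web,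
for `x = ((b, c), (d, s))`. -/
def webVec (x : (F × F) × (F × F)) : Fin 6 → F :=
  ![0, x.1.1, x.1.2, δ * x.2.2, x.2.1, x.2.2]

lemma mem_web_iff {a : Fin 6 → F} : a ∈ web δ ↔ ∃ x, webVec δ x = a := by
  simp only [web, Submodule.mem_span_insert, Submodule.mem_span_singleton]
  constructor
  · rintro ⟨b, _, ⟨c, _, ⟨d, _, ⟨s, rfl⟩, rfl⟩, rfl⟩, rfl⟩
    exact ⟨((b, c), (d, s)), by ext i; fin_cases i <;> simp [webVec, mul_comm]⟩
  · rintro ⟨⟨⟨b, c⟩, d, s⟩, rfl⟩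
    refine ⟨b, _, ⟨c, _, ⟨d, _, ⟨s, rfl⟩, rfl⟩, rfl⟩, ?_⟩
    ext i; fin_cases i <;> simp [webVec, mul_comm]

lemma webVec_injective : Function.Injective (webVec δ) :=
  Function.LeftInverse.injective (g := fun a => ((a 1, a 2), (a 4, a 5))) fun _ => rfl

@[simp] lemma webVec_eq_zero_iff {x : (F × F) × (F × F)} : webVec δ x = 0 ↔ x = 0 :=
  (webVec_injective δ).eq_iff' (by ext i; fin_cases i <;> simp [webVec])

lemma disc_webVec (x : (F × F) × (F × F)) :
    disc (webVec δ x) = x.1.1 * x.1.2 * x.2.1 - δ * x.2.2 * x.1.2 ^ 2 - x.2.2 * x.1.1 ^ 2 := by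
  simp [disc, webVec]

variable {δ}

lemma not_isDoubleLine_webVec (hδ : ¬ IsSquare δ) (x : (F × F) × (F × F)) :
    ¬ IsDoubleLine (webVec δ x) := by
  rintro ⟨c, l, hc, hl, h⟩
  have h0 := congrFun h 0
  have h3 := congrFun h 3
  have h5 := congrFun h 5
  simp only [webVec, mulLin, Fin.isValue, Matrix.cons_val_zero, Matrix.cons_val, Pi.smul_apply,
    smul_eq_mul, zero_eq_mul, hc, mul_eq_zero, or_self, false_or] at h0 h3 h5
  have key : l 1 * l 1 = δ * (l 2 * l 2) := mul_left_cancel₀ hc (by rw [← h3, h5]; ring)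
  have hl2 : l 2 = 0 := by
    by_contra hl2
    exact hδ ⟨l 1 / l 2, by field_simp; linear_combination -key⟩
  have hl1 : l 1 = 0 := by simpa [hl2] using key
  exact hl (by ext i; fin_cases i <;> assumption)

lemma isImagPair_webVec_iff (htwo : (2 : F) ≠ 0) {x : (F × F) × (F × F)} :
    IsImagPair (webVec δ x) ↔ x.1 = 0 ∧ ¬ IsSquare (x.2.1 ^ 2 - 4 * δ * x.2.2 ^ 2) := by
  rw [isImagPair_iff_of_coeff_zero htwo rfl, Prod.ext_iff, ← and_assoc]
  simp only [webVec, binaryDisc, Matrix.cons_val, Prod.fst_zero, Prod.snd_zero]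
  ring_nf

variable [Fintype F]

lemma ncard_web_eq_card [DecidableEq F] {T : (Fin 6 → F) → Prop} [DecidablePred T] :
    {a | a ≠ 0 ∧ a ∈ web δ ∧ T a}.ncard = #{x | x ≠ 0 ∧ T (webVec δ x)} := by
  rw [← Set.ncard_coe_finset, ← Set.ncard_image_of_injective _ (webVec_injective δ)]
  congr 1
  ext a
  simp only [Set.mem_ofPred_eq, Set.mem_image, coe_filter, mem_univ, true_and, mem_web_iff]
  constructor
  · rintro ⟨ha, ⟨x, rfl⟩, hT⟩
    exact ⟨x, ⟨by simpa using ha, hT⟩, rfl⟩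
  · rintro ⟨x, ⟨hx, hT⟩, rfl⟩
    exact ⟨by simpa using hx, ⟨x, rfl⟩, hT⟩

lemma numConics_web_eq [DecidableEq F] {T : (Fin 6 → F) → Prop} [DecidablePred T]
    (hT : ∀ {a} {c : F}, c ≠ 0 → T a → T (c • a)) {n : ℕ}
    (h : #{x | x ≠ 0 ∧ T (webVec δ x)} = (Fintype.card F - 1) * n) :
    numConics (web δ) T = n := by
  refine Nat.eq_of_mul_eq_mul_left (Nat.sub_pos_of_lt (Fintype.one_lt_card (α := F))) ?_
  rw [← h, ← ncard_web_eq_card, mul_comm, numConics_mul_card_sub_one _ hT]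

end Web

lemma isSquare_sq_mul_iff {F : Type} [Field F] {s a : F} (hs : s ≠ 0) :
    IsSquare (s ^ 2 * a) ↔ IsSquare a := by
  refine ⟨fun h => ?_, (IsSquare.sq s).mul⟩
  simpa [hs] using h.div (IsSquare.sq s)

section Counting

open Finset

lemma card_filter_univ_prod {α β : Type*} [Fintype α] [Fintype β] (P : α × β → Prop)
    [DecidablePred P] : #{x | P x} = ∑ a, #{b | P (a, b)} := by
  simp only [card_filter, Fintype.sum_prod_type]

variable {F : Type} [Field F] [Fintype F] [DecidableEq F]

lemma card_filter_mul_add_mul_eq_zero {α β : F} (h : α ≠ 0 ∨ β ≠ 0) :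
    #{p : F × F | α * p.1 + β * p.2 = 0} = Fintype.card F := by
  rw [← card_univ]
  rcases h with hα | hβ
  · refine card_nbij' (fun p => p.2) (fun s => (-(β * s) / α, s)) (by simp)
      (fun s _ => by
        simp only [coe_filter, mem_univ, true_and, Set.mem_ofPred_eq]
        field_simp
        ring) (fun p hp => ?_) (fun _ _ => rfl)
    simp only [coe_filter, mem_univ, true_and, Set.mem_ofPred_eq] at hp
    ext
    · field_simp; linear_combination -hp
    · rfl
  · refine card_nbij' (fun p => p.1) (fun d => (d, -(α * d) / β)) (by simp)
      (fun d _ => by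
        simp only [coe_filter, mem_univ, true_and, Set.mem_ofPred_eq]
        field_simp
        ring) (fun p hp => ?_) (fun _ _ => rfl)
    simp only [coe_filter, mem_univ, true_and, Set.mem_ofPred_eq] at hp
    ext
    · rfl
    · field_simp; linear_combination -hp

variable (hF : ringChar F ≠ 2)
include hF

lemma card_filter_sq_eq {a : F} (ha : a ≠ 0) :
    #{e : F | e ^ 2 = a} = if IsSquare a then 2 else 0 := by
  split_ifs with hsq
  · obtain ⟨r, rfl⟩ := hsq
    have hr : -r ≠ r := fun h => ha (by simp [(Ring.eq_self_iff_eq_zero_of_char_ne_two hF).1 h])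
    have hroots : ({e | e ^ 2 = r * r} : Finset F) = {r, -r} := by
      ext e
      simp [← sq, sq_eq_sq_iff_eq_or_eq_neg]
    rw [hroots, card_pair hr.symm]
  · exact card_eq_zero.2 (filter_eq_empty_iff.2 fun e _ he => hsq ⟨e, by rw [← he, sq]⟩)

lemma card_filter_sq_eq_sq_sub {c : F} (hc : c ≠ 0) :
    #{p : F × F | p.2 ^ 2 = p.1 ^ 2 - c} = Fintype.card F - 1 := by
  have h2 : (2 : F) ≠ 0 := Ring.two_ne_zero hF
  rw [← card_univ, ← card_erase_of_mem (mem_univ (0 : F))]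
  -- `(d, e) ↦ d + e` parametrizes the hyperbola `(d - e) (d + e) = c` by the nonzero elements
  refine card_nbij' (fun p => p.1 + p.2) (fun u => ((u + c / u) / 2, (u - c / u) / 2))
    (fun p hp => ?_) (fun u hu => ?_) (fun p hp => ?_) (fun u hu => ?_)
  all_goals simp only [coe_filter, coe_erase, coe_univ, Set.mem_ofPred_eq, Set.mem_sdiff,
    Set.mem_univ, Set.mem_singleton_iff, true_and, mem_univ] at *
  · intro h
    apply hc
    linear_combination (p.1 - p.2) * h + hp
  · field_simp; ring
  · have hp0 : p.1 + p.2 ≠ 0 := fun h => hc (by linear_combination (p.1 - p.2) * h + hp)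
    ext
    · field_simp
      linear_combination hp
    · field_simp
      linear_combination -hp
  · field_simp; ring

lemma two_mul_card_filter_isSquare_sq_sub_add_one {c : F} (hc : ¬ IsSquare c) :
    2 * #{d : F | IsSquare (d ^ 2 - c)} + 1 = Fintype.card F := by
  have hne (d : F) : d ^ 2 - c ≠ 0 := fun h => hc ⟨d, by linear_combination -h⟩
  have hyperbola := card_filter_sq_eq_sq_sub hF (fun h : c = 0 => hc (h ▸ IsSquare.zero))
  rw [card_filter_univ_prod] at hyperbola
  simp only [card_filter_sq_eq hF (hne _)] at hyperbola
  rw [card_filter, mul_sum]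
  simp only [mul_ite, mul_one, mul_zero]
  have := Fintype.card_pos (α := F)
  omega

lemma two_mul_card_filter_not_isSquare_add_one {c : F} (hc : ¬ IsSquare c) :
    2 * #{p : F × F | ¬ IsSquare (p.1 ^ 2 - c * p.2 ^ 2)} + 1 = Fintype.card F ^ 2 := by
  set M := #{d : F | IsSquare (d ^ 2 - c)}
  have hM := two_mul_card_filter_isSquare_sq_sub_add_one hF hc
  have hfiber (s : F) :
      #{d : F | ¬ IsSquare (d ^ 2 - c * s ^ 2)} = if s = 0 then 0 else M + 1 := by
    split_ifs with hs
    · simp [hs, IsSquare.sq]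
    · have hscale :
          #{d : F | ¬ IsSquare (d ^ 2 - c)} = #{d : F | ¬ IsSquare (d ^ 2 - c * s ^ 2)} :=
        card_equiv (Equiv.mulLeft₀ s hs) fun d => by
          simp only [mem_filter, mem_univ, true_and]
          change ¬ IsSquare (d ^ 2 - c) ↔ ¬ IsSquare ((s * d) ^ 2 - c * s ^ 2)
          rw [← isSquare_sq_mul_iff hs]
          ring_nf
      have := card_filter_add_card_filter_not (s := univ) (fun d : F => IsSquare (d ^ 2 - c))
      rw [card_univ] at this
      omega
  have hsum : #{p : F × F | ¬ IsSquare (p.1 ^ 2 - c * p.2 ^ 2)} =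
      ∑ s, #{d : F | ¬ IsSquare (d ^ 2 - c * s ^ 2)} := by
    simp only [card_filter, Fintype.sum_prod_type_right]
  rw [hsum, ← add_sum_erase _ _ (mem_univ 0), hfiber, if_pos rfl,
    sum_congr rfl fun s hs => (hfiber s).trans (if_neg (ne_of_mem_erase hs)), sum_const,
    card_erase_of_mem (mem_univ _), card_univ, ← hM, smul_eq_mul, Nat.add_sub_cancel]
  ring

end Counting

section WebCounts

open Finset
open scoped Classical

variable {F : Type} [Field F] [Fintype F] [DecidableEq F] {δ : F}

lemma card_filter_disc_webVec_eq_zero_add (hδ : δ ≠ 0) :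
    #{x | disc (webVec δ x) = 0} + Fintype.card F =
      Fintype.card F ^ 3 + Fintype.card F ^ 2 := by
  have hfiber (p : F × F) : #{y : F × F | disc (webVec δ (p, y)) = 0} =
      if p = 0 then Fintype.card F ^ 2 else Fintype.card F := by
    split_ifs with hp
    · subst hp
      simp [disc_webVec, sq]
    · obtain ⟨b, c⟩ := p
      have hbc : b * c ≠ 0 ∨ -(δ * c ^ 2 + b ^ 2) ≠ 0 := by
        by_contra! h
        rcases mul_eq_zero.1 h.1 with rfl | rfl
        · exact hp (by simpa [hδ] using h.2)
        · exact hp (by simpa using h.2)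
      refine Eq.trans ?_ (card_filter_mul_add_mul_eq_zero hbc)
      congr 1
      ext ⟨d, s⟩
      simp only [mem_filter, mem_univ, true_and, disc_webVec]
      constructor <;> intro h <;> linear_combination h
  rw [card_filter_univ_prod, ← add_sum_erase _ _ (mem_univ 0), hfiber, if_pos rfl,
    sum_congr rfl fun p hp => (hfiber p).trans (if_neg (ne_of_mem_erase hp)), sum_const,
    card_erase_of_mem (mem_univ _), card_univ, Fintype.card_prod, smul_eq_mul]
  obtain ⟨n, hn⟩ := Nat.exists_eq_add_one.2 (Fintype.card_pos (α := F))
  rw [hn, Nat.sub_eq_of_eq_add (show (n + 1) * (n + 1) = n * (n + 2) + 1 by ring)]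
  ring

lemma card_filter_isNonsingular_webVec_add :
    #{x | x ≠ 0 ∧ IsNonsingular (webVec δ x)} + #{x | disc (webVec δ x) = 0} =
      Fintype.card F ^ 4 := by
  have hnonsing : univ.filter (fun x => x ≠ 0 ∧ IsNonsingular (webVec δ x)) =
      univ.filter fun x => ¬ disc (webVec δ x) = 0 := by
    ext x
    rw [mem_filter, mem_filter]
    simp only [mem_univ, true_and, IsNonsingular, and_iff_right_iff_imp]
    rintro hd rfl
    simp [disc_webVec] at hd
  rw [hnonsing, add_comm, card_filter_add_card_filter_not, card_univ]
  simp only [Fintype.card_prod]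
  ring

variable (hδ : ¬ IsSquare δ)
include hδ

lemma card_filter_isRealPair_webVec_add :
    #{x | x ≠ 0 ∧ IsRealPair (webVec δ x)} + #{x | x ≠ 0 ∧ IsImagPair (webVec δ x)} + 1 =
      #{x | disc (webVec δ x) = 0} := by
  have hsplit : univ.filter (fun x => x ≠ 0 ∧ IsRealPair (webVec δ x)) ∪
      univ.filter (fun x => x ≠ 0 ∧ IsImagPair (webVec δ x)) =
      (univ.filter fun x => disc (webVec δ x) = 0).erase 0 := by
    ext x
    simp only [mem_union, mem_filter, mem_univ, true_and, mem_erase]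
    by_cases hx : x = 0
    · simp [hx]
    · rw [disc_eq_zero_iff_isRealPair_or_isImagPair (by simpa using hx)
        (not_isDoubleLine_webVec hδ x)]
      simp [hx]
  have hdisj : Disjoint (univ.filter fun x => x ≠ 0 ∧ IsRealPair (webVec δ x))
      (univ.filter fun x => x ≠ 0 ∧ IsImagPair (webVec δ x)) :=
    disjoint_filter.2 fun x _ hR hI => hR.2.not_isImagPair hI.2
  rw [← card_union_of_disjoint hdisj, hsplit, card_erase_add_one]
  simp [disc_webVec]

variable (hF : ringChar F ≠ 2)
include hF

lemma two_mul_card_filter_isImagPair_webVec_add_one :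
    2 * #{x | x ≠ 0 ∧ IsImagPair (webVec δ x)} + 1 = Fintype.card F ^ 2 := by
  have h4δ : ¬ IsSquare (4 * δ) := by
    rwa [show (4 : F) * δ = 2 ^ 2 * δ by norm_num, isSquare_sq_mul_iff (Ring.two_ne_zero hF)]
  rw [← two_mul_card_filter_not_isSquare_add_one hF h4δ]
  congr 2
  refine card_nbij' (fun x => x.2) (fun y => (0, y)) (fun x hx => ?_) (fun y hy => ?_)
    (fun x hx => ?_) (fun y _ => rfl)
  all_goals simp only [coe_filter, mem_univ, true_and, Set.mem_ofPred_eq,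
    isImagPair_webVec_iff (Ring.two_ne_zero hF)] at *
  · exact hx.2.2
  · exact ⟨by simpa [Prod.ext_iff] using fun h : y = 0 => hy (by simp [h]), hy⟩
  · exact Prod.ext hx.2.1.symm rfl

end WebCounts

/-- conic counts of the web `(X0X1, X0X2, X1X2, δX1^2 + X2^2)` with `δ` a
non-square (line-orbit `o_{8,2}`), `q` odd. -/
theorem web_o82_conic_counts (F : Type) [Field F] [Fintype F] (q : ℕ)
    (hq : Fintype.card F = q) (hodd : Odd q) (δ : F) (hδ : ∀ t : F, t ^ 2 ≠ δ)
    (W : Submodule F (Fin 6 → F))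
    (hW : W = Submodule.span F ({![0, 1, 0, 0, 0, 0], ![0, 0, 1, 0, 0, 0],
      ![0, 0, 0, 0, 1, 0], ![0, 0, 0, δ, 0, 1]} : Set (Fin 6 → F))) :
    numConics W IsDoubleLine = 0 ∧
    numConics W IsRealPair = q ^ 2 + (3 * q + 1) / 2 ∧
    numConics W IsImagPair = (q + 1) / 2 ∧
    numConics W IsNonsingular = q ^ 3 - q := by
  classical
  subst hq
  obtain rfl : W = web δ := hW
  have hF : ringChar F ≠ 2 := fun h =>
    Nat.not_even_iff_odd.2 hodd (Nat.even_iff.2 (FiniteField.even_card_iff_char_two.1 h))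
  have hδ : ¬ IsSquare δ := fun ⟨r, hr⟩ => hδ r (by rw [hr, sq])
  have hS := card_filter_disc_webVec_eq_zero_add (fun h : δ = 0 => hδ (h ▸ IsSquare.zero))
  have hR := card_filter_isRealPair_webVec_add hδ
  have hI := two_mul_card_filter_isImagPair_webVec_add_one hδ hF
  have hN := card_filter_isNonsingular_webVec_add (δ := δ)
  obtain ⟨k, hk⟩ := hodd
  rw [hk] at hS hI hN ⊢
  refine ⟨numConics_web_eq (fun hc h => h.smul hc) ?_,
    numConics_web_eq (fun hc h => h.smul hc) ?_,
    numConics_web_eq (fun hc h => h.smul hc) ?_,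
    numConics_web_eq (fun hc h => h.smul hc) ?_⟩
  all_goals rw [hk, Nat.add_sub_cancel]
  · simp [not_isDoubleLine_webVec hδ]
  · rw [show (3 * (2 * k + 1) + 1) / 2 = 3 * k + 2 by omega]
    linarith
  · rw [show (2 * k + 1 + 1) / 2 = k + 1 by omega]
    linarith
  · rw [Nat.sub_eq_of_eq_add
      (show (2 * k + 1) ^ 3 = 4 * k * (2 * k + 1) * (k + 1) + (2 * k + 1) by ring)]
    linarith
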